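/- arXiv:0811.3892 — 2 statements merged into one kernel-verified Lean document; each statement's English description precedes it below -/
import Mathlib

section
/- Let L be the A_{N−1} root lattice, i.e. the integer vectors in ℤ^N with coordinate sum zero, with the standard inner product. Then the set S_L = { α ∈ L : γ·γ ≥ γ·α for all γ ∈ L } is exactly the set of vectors in L all of whose coordinates lie in {−1, 0, 1}. -/
/-!
Testing the defining inequality against the roots `γ = e_j - e_k` gives `α j - α k ≤ 2`
for all `j, k`. If some coordinate were `≥ 2`, every coordinate would then be `≥ 0`, contradicting
`∑ α = 0`; symmetrically no coordinate is `≤ -2`. Conversely, when `|α i| ≤ 1` the inequality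
holds termwise, since `γ i * α i ≤ |γ i| ≤ γ i * γ i` for every integer `γ i`.
-/

open Finset

theorem lt_of_sum_eq_zero_of_forall_sub_le {ι G : Type*} [Fintype ι] [AddCommGroup G]
    [LinearOrder G] [IsOrderedAddMonoid G] {f : ι → G} {c : G} (hc : 0 < c)
    (hsum : ∑ i, f i = 0) (hspread : ∀ j k, f j - f k ≤ c) (j : ι) : f j < c := by
  by_contra! hcj
  have hnonneg : ∀ k ∈ univ, 0 ≤ f k := fun k _ => by
    have := hspread j k
    rw [sub_le_comm] at this
    exact (sub_nonneg.mpr hcj).trans this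
  have hpos : 0 < ∑ i, f i := sum_pos' hnonneg ⟨j, mem_univ j, hc.trans_le hcj⟩
  exact hpos.ne' hsum

theorem mem_Icc_of_sum_eq_zero_of_forall_sub_le_two {ι : Type*} [Fintype ι] {f : ι → ℤ}
    (hsum : ∑ i, f i = 0) (hspread : ∀ j k, f j - f k ≤ 2) (j : ι) : f j ∈ Set.Icc (-1) 1 := by
  have hupper := lt_of_sum_eq_zero_of_forall_sub_le two_pos hsum hspread j
  have hlower := lt_of_sum_eq_zero_of_forall_sub_le (f := -f) two_pos
    (by simp [sum_neg_distrib, hsum])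
    (fun j k => by simpa [sub_eq_add_neg, add_comm] using hspread k j) j
  simp only [Pi.neg_apply] at hlower
  constructor <;> omega

theorem sum_single_sub_single {ι : Type*} [Fintype ι] [DecidableEq ι] (j k : ι) :
    ∑ i, (Pi.single j (1 : ℤ) - Pi.single k 1 : ι → ℤ) i = 0 := by
  simp

theorem sum_single_sub_single_mul {ι : Type*} [Fintype ι] [DecidableEq ι] (j k : ι) (α : ι → ℤ) :
    ∑ i, (Pi.single j (1 : ℤ) - Pi.single k 1 : ι → ℤ) i * α i = α j - α k := by
  simp [sub_mul, sum_sub_distrib, Pi.single_apply]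

theorem sum_single_sub_single_mul_self {ι : Type*} [Fintype ι] [DecidableEq ι] {j k : ι}
    (hjk : j ≠ k) :
    ∑ i, (Pi.single j (1 : ℤ) - Pi.single k 1 : ι → ℤ) i *
      (Pi.single j (1 : ℤ) - Pi.single k 1 : ι → ℤ) i = 2 := by
  simp [mul_sub, sum_sub_distrib, Pi.single_apply, hjk, hjk.symm]

theorem mul_le_mul_self_of_abs_le_one {x a : ℤ} (ha : |a| ≤ 1) : x * a ≤ x * x := by
  calc x * a ≤ |x * a| := le_abs_self _
    _ = |x| * |a| := abs_mul x a
    _ ≤ |x| := mul_le_of_le_one_right (abs_nonneg x) ha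
    _ ≤ x * x := by
      rcases eq_or_ne x 0 with rfl | hx
      · simp
      · rw [← abs_mul_abs_self]
        exact le_mul_of_one_le_left (abs_nonneg x) (Int.one_le_abs hx)

theorem small_vectors_A_lattice (N : ℕ) :
    {α : Fin N → ℤ | (∑ i, α i) = 0 ∧
        ∀ γ : Fin N → ℤ, (∑ i, γ i) = 0 → (∑ i, γ i * α i) ≤ ∑ i, γ i * γ i}
    = {α : Fin N → ℤ | (∑ i, α i) = 0 ∧ ∀ i, α i = -1 ∨ α i = 0 ∨ α i = 1} := by
  ext α
  simp only [Set.mem_ofPred_eq, and_congr_right_iff]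
  intro hsum
  constructor
  · intro hsmall i
    have hspread : ∀ j k, α j - α k ≤ 2 := fun j k => by
      rcases eq_or_ne j k with rfl | hjk
      · simp
      · have := hsmall _ (sum_single_sub_single j k)
        rwa [sum_single_sub_single_mul, sum_single_sub_single_mul_self hjk] at this
    have := mem_Icc_of_sum_eq_zero_of_forall_sub_le_two hsum hspread i
    simp only [Set.mem_Icc] at this
    omega
  · intro hcoord γ _
    refine sum_le_sum fun i _ => mul_le_mul_self_of_abs_le_one ?_
    rcases hcoord i with h | h | h <;> simp [h]
end

section
/- Let L be a positive-definite integral lattice (a free ℤ-module of finite rank with a positive-definite symmetric ℤ-valued bilinear form). Then the set S_L = { α ∈ L : γ·γ ≥ γ·α for all γ ∈ L } is finite. -/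
/-!
Positive definiteness makes `B` nondegenerate, so a vector `α` is determined by its pairings
`B (b i) α` with a basis `b`. For a small vector `α`, testing the defining inequality against
`γ = ± b i` traps each pairing in `[-B (b i) (b i), B (b i) (b i)]`: the small vectors inject
into a finite box of `ℤ^ι`.
-/

namespace LinearMap

theorem separatingRight_of_pos {R M : Type*} [CommSemiring R] [Preorder R] [AddCommMonoid M]
    [Module R M] {B : M →ₗ[R] M →ₗ[R] R} (hpos : ∀ x : M, x ≠ 0 → 0 < B x x) :
    B.SeparatingRight :=
  fun y hy ↦ by_contra fun hne ↦ (hpos y hne).ne' (hy y)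

theorem abs_apply_le_of_forall_apply_le {R M : Type*} [CommRing R] [LinearOrder R]
    [IsOrderedRing R] [AddCommGroup M] [Module R M] {B : M →ₗ[R] M →ₗ[R] R} {α : M}
    (hα : ∀ γ : M, B γ α ≤ B γ γ) (γ : M) : |B γ α| ≤ B γ γ := by
  have hneg := hα (-γ)
  simp only [map_neg, neg_apply, neg_neg] at hneg
  exact abs_le.mpr ⟨neg_le.mp hneg, hα γ⟩

theorem SeparatingRight.injective_basis_pairing {R M₁ M₂ M ι : Type*} [CommRing R]
    [AddCommGroup M₁] [Module R M₁] [AddCommGroup M₂] [Module R M₂] [AddCommGroup M] [Module R M]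
    {B : M₁ →ₗ[R] M₂ →ₗ[R] M} (hB : B.SeparatingRight) (b : Module.Basis ι R M₁) :
    Function.Injective fun (y : M₂) (i : ι) ↦ B (b i) y :=
  fun _ _ h ↦ ker_eq_bot.mp (separatingRight_iff_flip_ker_eq_bot.mp hB) <|
    b.ext fun i ↦ congrFun h i

theorem SeparatingRight.finite_of_abs_basis_pairing_le {M₁ M₂ ι : Type*} [AddCommGroup M₁]
    [Module ℤ M₁] [AddCommGroup M₂] [Module ℤ M₂] [Finite ι] {B : M₁ →ₗ[ℤ] M₂ →ₗ[ℤ] ℤ}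
    (hB : B.SeparatingRight) (b : Module.Basis ι ℤ M₁) (c : ι → ℤ) {S : Set M₂}
    (hS : ∀ y ∈ S, ∀ i, |B (b i) y| ≤ c i) : S.Finite := by
  refine Set.Finite.of_finite_image ?_ (hB.injective_basis_pairing b).injOn
  refine (Set.Finite.pi fun i ↦ Set.finite_Icc (-c i) (c i)).subset ?_
  rintro _ ⟨y, hy, rfl⟩ i -
  exact abs_le.mp (hS y hy i)

end LinearMap

theorem small_vectors_finite_general (L : Type*) [AddCommGroup L] [Module ℤ L]
    [Module.Free ℤ L] [Module.Finite ℤ L]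
    (B : L →ₗ[ℤ] L →ₗ[ℤ] ℤ)
    (hpos : ∀ x : L, x ≠ 0 → 0 < B x x) :
    {α : L | ∀ γ : L, B γ α ≤ B γ γ}.Finite :=
  let b := Module.Free.chooseBasis ℤ L
  (LinearMap.separatingRight_of_pos hpos).finite_of_abs_basis_pairing_le b
    (fun i ↦ B (b i) (b i)) fun _ hα i ↦ LinearMap.abs_apply_le_of_forall_apply_le hα (b i)

theorem small_vectors_finite (L : Type*) [AddCommGroup L] [Module ℤ L]
    [Module.Free ℤ L] [Module.Finite ℤ L]
    (B : L →ₗ[ℤ] L →ₗ[ℤ] ℤ)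
    (hsymm : ∀ x y : L, B x y = B y x)
    (hpos : ∀ x : L, x ≠ 0 → 0 < B x x) :
    {α : L | ∀ γ : L, B γ α ≤ B γ γ}.Finite :=
  small_vectors_finite_general L B hpos
end
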